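/- The operators α̂ and β̂ extend from the algebraic span of the basis vectors to bounded operators on H, each of operator norm at most 1. -/
import Mathlib


noncomputable section

open Real

/-- Validity of an index triple `(N, I, J)` encoding `n = N/2`, `i = I/2`, `j = J/2`, with
`n ∈ ½ℤ₊` and `i, j ∈ {-n, -n+1, …, n}` (so `|I| ≤ N`, `|J| ≤ N` and `I ≡ J ≡ N (mod 2)`). -/
abbrev validH (x : ℤ × ℤ × ℤ) : Prop :=
  0 ≤ x.1 ∧ |x.2.1| ≤ x.1 ∧ |x.2.2| ≤ x.1 ∧
    (x.1 + x.2.1) % 2 = 0 ∧ (x.1 + x.2.2) % 2 = 0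

abbrev IdxH : Type := {x : ℤ × ℤ × ℤ // validH x}

/-- The Hilbert space `H = L₂(h)` with orthonormal basis `e^(n)_{ij}`. -/
abbrev Hsp : Type := lp (fun _ : IdxH => ℂ) 2

/-- The basis vector `e^(n)_{ij}` of `H`, where `n = N/2`, `i = I/2`, `j = J/2`;
it is `0` if the indices are out of range. -/
def eH (N I J : ℤ) : Hsp :=
  if h : validH (N, I, J) then lp.single 2 (⟨(N, I, J), h⟩ : IdxH) (1 : ℂ) else 0

/-- the coefficient `q^(2n+i+j+1)` (here `n = N/2`, `i = I/2`, `j = J/2`) -/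
def aC1 (q : ℝ) (N I J : ℤ) : ℝ := q ^ ((N : ℝ) + ((I : ℝ) + (J : ℝ)) / 2 + 1)

/-- the coefficient `(1-q^(2n+2i))^(1/2) * (1-q^(2n+2j))^(1/2)` -/
def aC2 (q : ℝ) (N I J : ℤ) : ℝ :=
  Real.sqrt (1 - q ^ ((N : ℝ) + (I : ℝ))) * Real.sqrt (1 - q ^ ((N : ℝ) + (J : ℝ)))

/-- the coefficient `-q^(n+j) * (1-q^(2n+2i+2))^(1/2)` -/
def bC1 (q : ℝ) (N I J : ℤ) : ℝ :=
  -(q ^ (((N : ℝ) + (J : ℝ)) / 2)) * Real.sqrt (1 - q ^ ((N : ℝ) + (I : ℝ) + 2))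

/-- the coefficient `q^(n+i) * (1-q^(2n+2j))^(1/2)` -/
def bC2 (q : ℝ) (N I J : ℤ) : ℝ :=
  q ^ (((N : ℝ) + (I : ℝ)) / 2) * Real.sqrt (1 - q ^ ((N : ℝ) + (J : ℝ)))

/-- `A` acts on the basis vectors of `H` by the defining formula of `α̂`:
`α̂ e^(n)_{ij} = q^(2n+i+j+1) e^(n+1/2)_{i-1/2,j-1/2}
  + (1-q^(2n+2i))^(1/2) (1-q^(2n+2j))^(1/2) e^(n-1/2)_{i-1/2,j-1/2}`. -/
def IsAlphaHat (q : ℝ) (A : Hsp →L[ℂ] Hsp) : Prop :=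
  ∀ N I J : ℤ, validH (N, I, J) →
    A (eH N I J) = (aC1 q N I J : ℂ) • eH (N + 1) (I - 1) (J - 1)
      + (aC2 q N I J : ℂ) • eH (N - 1) (I - 1) (J - 1)

/-- `B` acts on the basis vectors of `H` by the defining formula of `β̂`:
`β̂ e^(n)_{ij} = -q^(n+j) (1-q^(2n+2i+2))^(1/2) e^(n+1/2)_{i+1/2,j-1/2}
  + q^(n+i) (1-q^(2n+2j))^(1/2) e^(n-1/2)_{i+1/2,j-1/2}`. -/
def IsBetaHat (q : ℝ) (B : Hsp →L[ℂ] Hsp) : Prop :=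
  ∀ N I J : ℤ, validH (N, I, J) →
    B (eH N I J) = (bC1 q N I J : ℂ) • eH (N + 1) (I + 1) (J - 1)
      + (bC2 q N I J : ℂ) • eH (N - 1) (I + 1) (J - 1)

namespace AlphaBetaAux

/-- weight `q^(N+J)` attached to an index triple -/
def wq (q : ℝ) (p : ℤ × ℤ × ℤ) : ℝ := q ^ ((p.1 : ℝ) + (p.2.2 : ℝ))

/-- source shift with `N ↦ N-1` -/
def τ1 (ε : ℤ) (p : ℤ × ℤ × ℤ) : ℤ × ℤ × ℤ := (p.1 - 1, p.2.1 + ε, p.2.2 + 1)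

/-- source shift with `N ↦ N+1` -/
def τ2 (ε : ℤ) (p : ℤ × ℤ × ℤ) : ℤ × ℤ × ℤ := (p.1 + 1, p.2.1 + ε, p.2.2 + 1)

/-- extension of an `ℓ²` vector to all of `ℤ³`, by `0` on invalid triples -/
def Yext (x : Hsp) (p : ℤ × ℤ × ℤ) : ℂ := if h : validH p then x ⟨p, h⟩ else 0

lemma Yext_add (x y : Hsp) (p : ℤ × ℤ × ℤ) :
    Yext (x + y) p = Yext x p + Yext y p := by
  unfold Yext
  split
  · rw [lp.coeFn_add]; rfl
  · simp

lemma Yext_smul (c : ℂ) (x : Hsp) (p : ℤ × ℤ × ℤ) :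
    Yext (c • x) p = c * Yext x p := by
  unfold Yext
  split
  · rw [lp.coeFn_smul]; rfl
  · simp

lemma valid_nonneg {p : ℤ × ℤ × ℤ} (h : validH p) :
    0 ≤ p.1 + p.2.1 ∧ 0 ≤ p.1 + p.2.2 := by
  obtain ⟨h0, h1, h2, _, _⟩ := h
  rw [abs_le] at h1 h2
  exact ⟨by omega, by omega⟩

private lemma wtd {a b w1 w2 u v : ℝ} (hw1 : 0 < w1) (hw2 : 0 < w2)
    (ha : 0 ≤ a) (hb : 0 ≤ b) (hu : 0 ≤ u) (hv : 0 ≤ v)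
    (h : a ^ 2 * w2 + b ^ 2 * w1 ≤ w1 * w2) :
    (a * u + b * v) ^ 2 ≤ w1 * u ^ 2 + w2 * v ^ 2 := by
  have h1 : w1 * w2 * ((a * u + b * v) ^ 2) ≤ (a ^ 2 * w2 + b ^ 2 * w1) * (w1 * u ^ 2 + w2 * v ^ 2) := by
    nlinarith [sq_nonneg (a * w2 * v - b * w1 * u)]
  have h2 : (a ^ 2 * w2 + b ^ 2 * w1) * (w1 * u ^ 2 + w2 * v ^ 2)
      ≤ (w1 * w2) * (w1 * u ^ 2 + w2 * v ^ 2) :=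
    mul_le_mul_of_nonneg_right h (by positivity)
  exact le_of_mul_le_mul_left (by linarith) (mul_pos hw1 hw2)

lemma exists_op {q : ℝ} (hq0 : 0 < q) (hq1 : q < 1) (ε : ℤ) (c₁ c₂ : ℤ × ℤ × ℤ → ℝ)
    (hc : ∀ t : IdxH,
      (c₁ (τ1 ε t.1)) ^ 2 * (1 - wq q (τ2 ε t.1)) + (c₂ (τ2 ε t.1)) ^ 2 * wq q (τ1 ε t.1)
        ≤ wq q (τ1 ε t.1) * (1 - wq q (τ2 ε t.1))) :
    ∃ T : Hsp →L[ℂ] Hsp, ‖T‖ ≤ 1 ∧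
      ∀ (x : Hsp) (t : IdxH),
        T x t = (c₁ (τ1 ε t.1) : ℂ) * Yext x (τ1 ε t.1)
          + (c₂ (τ2 ε t.1) : ℂ) * Yext x (τ2 ε t.1) := by
  classical
  have hp2 : (0 : ℝ) < (2 : ENNReal).toReal := by norm_num
  have hrp : ∀ r : ℝ, r ^ ((2 : ENNReal)).toReal = r ^ (2 : ℕ) := by
    intro r
    rw [show ((2 : ENNReal)).toReal = ((2 : ℕ) : ℝ) by norm_num, Real.rpow_natCast]
  -- injectivity of the two reindexing maps
  have hinj1 : Function.Injective (fun t : IdxH => τ1 ε t.1) := by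
    intro a b h
    apply Subtype.ext
    simp only [τ1, Prod.ext_iff] at h
    obtain ⟨h1, h2, h3⟩ := h
    have := a.1
    exact Prod.ext (by omega) (Prod.ext (by omega) (by omega))
  have hinj2 : Function.Injective (fun t : IdxH => τ2 ε t.1) := by
    intro a b h
    apply Subtype.ext
    simp only [τ2, Prod.ext_iff] at h
    obtain ⟨h1, h2, h3⟩ := h
    exact Prod.ext (by omega) (Prod.ext (by omega) (by omega))
  -- the main estimate, for an arbitrary x
  have key : ∀ x : Hsp,
      Summable (fun t : IdxH => ‖(c₁ (τ1 ε t.1) : ℂ) * Yext x (τ1 ε t.1)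
          + (c₂ (τ2 ε t.1) : ℂ) * Yext x (τ2 ε t.1)‖ ^ (2 : ℕ)) ∧
      (∑' t : IdxH, ‖(c₁ (τ1 ε t.1) : ℂ) * Yext x (τ1 ε t.1)
          + (c₂ (τ2 ε t.1) : ℂ) * Yext x (τ2 ε t.1)‖ ^ (2 : ℕ))
        ≤ ∑' s : IdxH, ‖x s‖ ^ (2 : ℕ) := by
    intro x
    set F : ℤ × ℤ × ℤ → ℝ := fun p => ‖Yext x p‖ ^ (2 : ℕ) with hF
    have hF0 : ∀ p, 0 ≤ F p := fun p => sq_nonneg _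
    have hFz : ∀ p, ¬validH p → F p = 0 := by
      intro p hp
      simp only [hF, Yext, dif_neg hp, norm_zero]
      norm_num
    have hx2 : Summable (fun s : IdxH => ‖x s‖ ^ (2 : ℕ)) := by
      have := (lp.memℓp x).summable hp2
      refine this.congr fun s => ?_
      exact hrp _
    have hFcoe : ∀ s : IdxH, F s.1 = ‖x s‖ ^ (2 : ℕ) := by
      intro s
      simp only [hF, Yext, dif_pos s.2]
    have hFsum : Summable F := by
      have h1 : Summable ((fun p => F p) ∘ ((↑) : {p : ℤ × ℤ × ℤ | validH p} → ℤ × ℤ × ℤ)) := by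
        refine hx2.congr fun s => ?_
        exact (hFcoe s).symm
      have h2 := summable_subtype_iff_indicator.mp h1
      refine h2.congr fun p => ?_
      by_cases hp : p ∈ {p : ℤ × ℤ × ℤ | validH p}
      · exact Set.indicator_of_mem hp _
      · rw [Set.indicator_of_notMem hp]
        exact (hFz p hp).symm
    have hwnn : ∀ p, 0 ≤ wq q p := fun p => le_of_lt (Real.rpow_pos_of_pos hq0 _)
    have hwle1 : ∀ p, validH p → wq q p ≤ 1 := by
      intro p hp
      refine Real.rpow_le_one (le_of_lt hq0) (le_of_lt hq1) ?_
      have := (valid_nonneg hp).2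
      push_cast
      exact_mod_cast this
    have hWF_le : ∀ p, wq q p * F p ≤ F p := by
      intro p
      by_cases hp : validH p
      · exact mul_le_of_le_one_left (hF0 p) (hwle1 p hp)
      · rw [hFz p hp, mul_zero]
    have hWFsum : Summable (fun p => wq q p * F p) :=
      Summable.of_nonneg_of_le (fun p => mul_nonneg (hwnn p) (hF0 p)) hWF_le hFsum
    have hW2Fsum : Summable (fun p => (1 - wq q p) * F p) := by
      refine (hFsum.sub hWFsum).congr fun p => ?_
      ring
    have hW2F0 : ∀ p, 0 ≤ (1 - wq q p) * F p := by
      intro p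
      by_cases hp : validH p
      · exact mul_nonneg (by linarith [hwle1 p hp]) (hF0 p)
      · rw [hFz p hp, mul_zero]
    set G1 : IdxH → ℝ := fun t => wq q (τ1 ε t.1) * F (τ1 ε t.1) with hG1
    set G2 : IdxH → ℝ := fun t => (1 - wq q (τ2 ε t.1)) * F (τ2 ε t.1) with hG2
    have hG1sum : Summable G1 := hWFsum.comp_injective hinj1
    have hG2sum : Summable G2 := hW2Fsum.comp_injective hinj2
    -- pointwise bound
    have hpt : ∀ t : IdxH, ‖(c₁ (τ1 ε t.1) : ℂ) * Yext x (τ1 ε t.1)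
        + (c₂ (τ2 ε t.1) : ℂ) * Yext x (τ2 ε t.1)‖ ^ (2 : ℕ) ≤ G1 t + G2 t := by
      intro t
      have hw1pos : 0 < wq q (τ1 ε t.1) := Real.rpow_pos_of_pos hq0 _
      have hw2pos : 0 < 1 - wq q (τ2 ε t.1) := by
        have hLe : (0 : ℤ) < (τ2 ε t.1).1 + (τ2 ε t.1).2.2 := by
          have := (valid_nonneg t.2).2
          simp only [τ2]
          omega
        have : (0 : ℝ) < ((τ2 ε t.1).1 : ℝ) + ((τ2 ε t.1).2.2 : ℝ) := by exact_mod_cast hLe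
        have := Real.rpow_lt_one (le_of_lt hq0) hq1 this
        unfold wq
        linarith
      have habs : ‖(c₁ (τ1 ε t.1) : ℂ) * Yext x (τ1 ε t.1)
          + (c₂ (τ2 ε t.1) : ℂ) * Yext x (τ2 ε t.1)‖
          ≤ |c₁ (τ1 ε t.1)| * ‖Yext x (τ1 ε t.1)‖ + |c₂ (τ2 ε t.1)| * ‖Yext x (τ2 ε t.1)‖ := by
        refine le_trans (norm_add_le _ _) ?_
        rw [norm_mul, norm_mul, Complex.norm_real, Complex.norm_real,
          Real.norm_eq_abs, Real.norm_eq_abs]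
      have hsq : ‖(c₁ (τ1 ε t.1) : ℂ) * Yext x (τ1 ε t.1)
          + (c₂ (τ2 ε t.1) : ℂ) * Yext x (τ2 ε t.1)‖ ^ (2 : ℕ)
          ≤ (|c₁ (τ1 ε t.1)| * ‖Yext x (τ1 ε t.1)‖
            + |c₂ (τ2 ε t.1)| * ‖Yext x (τ2 ε t.1)‖) ^ (2 : ℕ) :=
        pow_le_pow_left₀ (norm_nonneg _) habs 2
      refine le_trans hsq ?_
      have := wtd hw1pos hw2pos (abs_nonneg (c₁ (τ1 ε t.1))) (abs_nonneg (c₂ (τ2 ε t.1)))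
        (norm_nonneg (Yext x (τ1 ε t.1))) (norm_nonneg (Yext x (τ2 ε t.1)))
        (by rw [sq_abs, sq_abs]; exact hc t)
      simpa [hG1, hG2, hF] using this
    have hTsum : Summable (fun t : IdxH => ‖(c₁ (τ1 ε t.1) : ℂ) * Yext x (τ1 ε t.1)
        + (c₂ (τ2 ε t.1) : ℂ) * Yext x (τ2 ε t.1)‖ ^ (2 : ℕ)) :=
      Summable.of_nonneg_of_le (fun t => sq_nonneg _) hpt (hG1sum.add hG2sum)
    refine ⟨hTsum, ?_⟩
    have step1 : (∑' t : IdxH, ‖(c₁ (τ1 ε t.1) : ℂ) * Yext x (τ1 ε t.1)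
        + (c₂ (τ2 ε t.1) : ℂ) * Yext x (τ2 ε t.1)‖ ^ (2 : ℕ)) ≤ ∑' t, (G1 t + G2 t) :=
      Summable.tsum_le_tsum hpt hTsum (hG1sum.add hG2sum)
    have step2 : (∑' t, (G1 t + G2 t)) = (∑' t, G1 t) + ∑' t, G2 t :=
      Summable.tsum_add hG1sum hG2sum
    have step3 : (∑' t, G1 t) ≤ ∑' p, wq q p * F p :=
      Summable.tsum_le_tsum_of_inj _ hinj1 (fun p _ => mul_nonneg (hwnn p) (hF0 p))
        (fun t => le_refl _) hG1sum hWFsum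
    have step4 : (∑' t, G2 t) ≤ ∑' p, (1 - wq q p) * F p :=
      Summable.tsum_le_tsum_of_inj _ hinj2 (fun p _ => hW2F0 p) (fun t => le_refl _) hG2sum hW2Fsum
    have step5 : (∑' p, wq q p * F p) + (∑' p, (1 - wq q p) * F p) = ∑' p, F p := by
      rw [← Summable.tsum_add hWFsum hW2Fsum]
      exact tsum_congr fun p => by ring
    have step6 : (∑' p, F p) = ∑' s : IdxH, ‖x s‖ ^ (2 : ℕ) := by
      have h1 : (∑' p, F p) = ∑' p : {p : ℤ × ℤ × ℤ | validH p}, F p := by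
        rw [tsum_subtype]
        refine tsum_congr fun p => ?_
        by_cases hp : p ∈ {p : ℤ × ℤ × ℤ | validH p}
        · exact (Set.indicator_of_mem hp _).symm
        · rw [Set.indicator_of_notMem hp]
          exact hFz p hp
      rw [h1]
      exact tsum_congr fun s => hFcoe s
    linarith
  -- build the linear map
  let Tlin : Hsp →ₗ[ℂ] Hsp :=
    { toFun := fun x => ⟨fun t : IdxH => (c₁ (τ1 ε t.1) : ℂ) * Yext x (τ1 ε t.1)
          + (c₂ (τ2 ε t.1) : ℂ) * Yext x (τ2 ε t.1),
        memℓp_gen ((key x).1.congr fun t => (hrp _).symm)⟩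
      map_add' := by
        intro x y
        apply Subtype.ext
        funext t
        show (c₁ (τ1 ε t.1) : ℂ) * Yext (x + y) (τ1 ε t.1)
            + (c₂ (τ2 ε t.1) : ℂ) * Yext (x + y) (τ2 ε t.1) = _
        rw [Yext_add, Yext_add]
        show _ = (c₁ (τ1 ε t.1) : ℂ) * Yext x (τ1 ε t.1)
            + (c₂ (τ2 ε t.1) : ℂ) * Yext x (τ2 ε t.1)
          + ((c₁ (τ1 ε t.1) : ℂ) * Yext y (τ1 ε t.1)
            + (c₂ (τ2 ε t.1) : ℂ) * Yext y (τ2 ε t.1))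
        ring
      map_smul' := by
        intro c x
        apply Subtype.ext
        funext t
        show (c₁ (τ1 ε t.1) : ℂ) * Yext (c • x) (τ1 ε t.1)
            + (c₂ (τ2 ε t.1) : ℂ) * Yext (c • x) (τ2 ε t.1) = _
        rw [Yext_smul, Yext_smul]
        show _ = c * ((c₁ (τ1 ε t.1) : ℂ) * Yext x (τ1 ε t.1)
            + (c₂ (τ2 ε t.1) : ℂ) * Yext x (τ2 ε t.1))
        ring }
  have hbound : ∀ x : Hsp, ‖Tlin x‖ ≤ 1 * ‖x‖ := by
    intro x
    rw [one_mul]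
    refine lp.norm_le_of_tsum_le hp2 (norm_nonneg x) ?_
    have hx : ‖x‖ ^ ((2 : ENNReal)).toReal = ∑' s : IdxH, ‖x s‖ ^ ((2 : ENNReal)).toReal :=
      lp.norm_rpow_eq_tsum hp2 x
    rw [hx]
    have lhs_eq : (∑' t : IdxH, ‖(Tlin x) t‖ ^ ((2 : ENNReal)).toReal)
        = ∑' t : IdxH, ‖(c₁ (τ1 ε t.1) : ℂ) * Yext x (τ1 ε t.1)
          + (c₂ (τ2 ε t.1) : ℂ) * Yext x (τ2 ε t.1)‖ ^ (2 : ℕ) :=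
      tsum_congr fun t => hrp _
    have rhs_eq : (∑' s : IdxH, ‖x s‖ ^ ((2 : ENNReal)).toReal)
        = ∑' s : IdxH, ‖x s‖ ^ (2 : ℕ) := tsum_congr fun s => hrp _
    rw [lhs_eq, rhs_eq]
    exact (key x).2
  refine ⟨LinearMap.mkContinuous Tlin 1 hbound, ?_, ?_⟩
  · exact LinearMap.mkContinuous_norm_le Tlin zero_le_one hbound
  · intro x t
    rfl

lemma eH_apply (N I J : ℤ) (t : IdxH) :
    (eH N I J) t = if t.1 = (N, I, J) then 1 else 0 := by
  unfold eH
  split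
  · rename_i h
    by_cases he : t = (⟨(N, I, J), h⟩ : IdxH)
    · subst he
      rw [lp.single_apply_self, if_pos rfl]
    · rw [lp.single_apply_ne _ _ _ he, if_neg (fun hh => he (Subtype.ext hh))]
  · rename_i h
    have : t.1 ≠ (N, I, J) := fun hh => h (hh ▸ t.2)
    rw [if_neg this]
    exact congrFun (lp.coeFn_zero (fun _ : IdxH => ℂ) 2) t

lemma Yext_eH {N I J : ℤ} (h : validH (N, I, J)) (p : ℤ × ℤ × ℤ) :
    Yext (eH N I J) p = if p = (N, I, J) then 1 else 0 := by
  unfold Yext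
  by_cases hp : validH p
  · rw [dif_pos hp, eH_apply]
  · rw [dif_neg hp, if_neg (fun hh => hp (by rw [hh]; exact h))]

end AlphaBetaAux


/-- The operators `α̂` and `β̂` extend from the algebraic span of the basis
vectors to bounded operators on `H`, each of operator norm at most 1. -/
theorem alphaHat_betaHat_bounded (q : ℝ) (hq0 : 0 < q) (hq1 : q < 1) :
    ∃ A B : Hsp →L[ℂ] Hsp, ‖A‖ ≤ 1 ∧ ‖B‖ ≤ 1 ∧ IsAlphaHat q A ∧ IsBetaHat q B := by
  classical
  open AlphaBetaAux in
  have hq0' : (0 : ℝ) ≤ q := hq0.le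
  have hsq : ∀ r : ℝ, (q ^ r) ^ (2 : ℕ) = q ^ (r * 2) := by
    intro r
    rw [← Real.rpow_natCast (q ^ r) 2, ← Real.rpow_mul hq0']
    norm_num
  have hle1 : ∀ r : ℝ, 0 ≤ r → q ^ r ≤ 1 := fun r hr => Real.rpow_le_one hq0' hq1.le hr
  -- the Schur-type inequality for α̂
  have hcA : ∀ t : IdxH,
      ((fun p : ℤ × ℤ × ℤ => aC1 q p.1 p.2.1 p.2.2) (τ1 1 t.1)) ^ 2 * (1 - wq q (τ2 1 t.1))
        + ((fun p : ℤ × ℤ × ℤ => aC2 q p.1 p.2.1 p.2.2) (τ2 1 t.1)) ^ 2 * wq q (τ1 1 t.1)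
        ≤ wq q (τ1 1 t.1) * (1 - wq q (τ2 1 t.1)) := by
    rintro ⟨⟨M, K, L⟩, ht⟩
    obtain ⟨hMK, hML⟩ := valid_nonneg ht
    have hMKr : (0 : ℝ) ≤ (M : ℝ) + K := by exact_mod_cast hMK
    have hMLr : (0 : ℝ) ≤ (M : ℝ) + L := by exact_mod_cast hML
    simp only [τ1, τ2, wq, aC1, aC2]
    have e1 : ((M - 1 : ℤ) : ℝ) + (((K + 1 : ℤ) : ℝ) + ((L + 1 : ℤ) : ℝ)) / 2 + 1
        = ((M : ℝ) + K + 2 + ((M : ℝ) + L)) / 2 := by push_cast; ring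
    have e2 : ((M + 1 : ℤ) : ℝ) + ((K + 1 : ℤ) : ℝ) = (M : ℝ) + K + 2 := by push_cast; ring
    have e3 : ((M + 1 : ℤ) : ℝ) + ((L + 1 : ℤ) : ℝ) = (M : ℝ) + L + 2 := by push_cast; ring
    have e4 : ((M - 1 : ℤ) : ℝ) + ((L + 1 : ℤ) : ℝ) = (M : ℝ) + L := by push_cast; ring
    rw [e1, e2, e3, e4]
    have c1sq : (q ^ (((M : ℝ) + K + 2 + ((M : ℝ) + L)) / 2)) ^ 2
        = q ^ ((M : ℝ) + K + 2) * q ^ ((M : ℝ) + L) := by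
      rw [hsq, ← Real.rpow_add hq0]
      congr 1
      ring
    have c2sq : (Real.sqrt (1 - q ^ ((M : ℝ) + K + 2)) * Real.sqrt (1 - q ^ ((M : ℝ) + L + 2))) ^ 2
        = (1 - q ^ ((M : ℝ) + K + 2)) * (1 - q ^ ((M : ℝ) + L + 2)) := by
      rw [mul_pow, Real.sq_sqrt (by linarith [hle1 _ (by linarith : (0:ℝ) ≤ (M:ℝ) + K + 2)]),
        Real.sq_sqrt (by linarith [hle1 _ (by linarith : (0:ℝ) ≤ (M:ℝ) + L + 2)])]
    rw [c1sq, c2sq]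
    exact le_of_eq (by ring)
  -- the Schur-type inequality for β̂
  have hcB : ∀ t : IdxH,
      ((fun p : ℤ × ℤ × ℤ => bC1 q p.1 p.2.1 p.2.2) (τ1 (-1) t.1)) ^ 2 * (1 - wq q (τ2 (-1) t.1))
        + ((fun p : ℤ × ℤ × ℤ => bC2 q p.1 p.2.1 p.2.2) (τ2 (-1) t.1)) ^ 2 * wq q (τ1 (-1) t.1)
        ≤ wq q (τ1 (-1) t.1) * (1 - wq q (τ2 (-1) t.1)) := by
    rintro ⟨⟨M, K, L⟩, ht⟩
    obtain ⟨hMK, hML⟩ := valid_nonneg ht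
    have hMKr : (0 : ℝ) ≤ (M : ℝ) + K := by exact_mod_cast hMK
    have hMLr : (0 : ℝ) ≤ (M : ℝ) + L := by exact_mod_cast hML
    simp only [τ1, τ2, wq, bC1, bC2]
    have e1 : (((M - 1 : ℤ) : ℝ) + ((L + 1 : ℤ) : ℝ)) / 2 = ((M : ℝ) + L) / 2 := by
      push_cast; ring
    have e2 : ((M - 1 : ℤ) : ℝ) + ((K + -1 : ℤ) : ℝ) + 2 = (M : ℝ) + K := by push_cast; ring
    have e3 : (((M + 1 : ℤ) : ℝ) + ((K + -1 : ℤ) : ℝ)) / 2 = ((M : ℝ) + K) / 2 := by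
      push_cast; ring
    have e4 : ((M + 1 : ℤ) : ℝ) + ((L + 1 : ℤ) : ℝ) = (M : ℝ) + L + 2 := by push_cast; ring
    have e5 : ((M - 1 : ℤ) : ℝ) + ((L + 1 : ℤ) : ℝ) = (M : ℝ) + L := by push_cast; ring
    rw [e1, e2, e3, e4, e5]
    have c1sq : (-(q ^ (((M : ℝ) + L) / 2)) * Real.sqrt (1 - q ^ ((M : ℝ) + K))) ^ 2
        = q ^ ((M : ℝ) + L) * (1 - q ^ ((M : ℝ) + K)) := by
      have h1 : (0 : ℝ) ≤ 1 - q ^ ((M : ℝ) + K) := by linarith [hle1 _ hMKr]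
      calc (-(q ^ (((M : ℝ) + L) / 2)) * Real.sqrt (1 - q ^ ((M : ℝ) + K))) ^ 2
          = (q ^ (((M : ℝ) + L) / 2)) ^ 2 * Real.sqrt (1 - q ^ ((M : ℝ) + K)) ^ 2 := by ring
        _ = q ^ ((M : ℝ) + L) * (1 - q ^ ((M : ℝ) + K)) := by
            rw [hsq, show ((M : ℝ) + L) / 2 * 2 = (M : ℝ) + L by ring, Real.sq_sqrt h1]
    have c2sq : (q ^ (((M : ℝ) + K) / 2) * Real.sqrt (1 - q ^ ((M : ℝ) + L + 2))) ^ 2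
        = q ^ ((M : ℝ) + K) * (1 - q ^ ((M : ℝ) + L + 2)) := by
      have h1 : (0 : ℝ) ≤ 1 - q ^ ((M : ℝ) + L + 2) := by
        linarith [hle1 _ (by linarith : (0 : ℝ) ≤ (M : ℝ) + L + 2)]
      rw [mul_pow, Real.sq_sqrt h1, hsq, show ((M : ℝ) + K) / 2 * 2 = (M : ℝ) + K by ring]
    rw [c1sq, c2sq]
    exact le_of_eq (by ring)
  obtain ⟨A, hA1, hA2⟩ := exists_op hq0 hq1 1
    (fun p : ℤ × ℤ × ℤ => aC1 q p.1 p.2.1 p.2.2) (fun p : ℤ × ℤ × ℤ => aC2 q p.1 p.2.1 p.2.2) hcA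
  obtain ⟨B, hB1, hB2⟩ := exists_op hq0 hq1 (-1)
    (fun p : ℤ × ℤ × ℤ => bC1 q p.1 p.2.1 p.2.2) (fun p : ℤ × ℤ × ℤ => bC2 q p.1 p.2.1 p.2.2) hcB
  refine ⟨A, B, hA1, hB1, ?_, ?_⟩
  · -- A is α̂
    intro N I J h
    refine lp.ext (funext fun t => ?_)
    rw [hA2 (eH N I J) t]
    obtain ⟨⟨M, K, L⟩, ht⟩ := t
    simp only [τ1, τ2]
    rw [Yext_eH h, Yext_eH h, lp.coeFn_add, Pi.add_apply, lp.coeFn_smul, lp.coeFn_smul,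
      Pi.smul_apply, Pi.smul_apply, smul_eq_mul, smul_eq_mul, eH_apply, eH_apply]
    by_cases h1 : (M, K, L) = ((N + 1 : ℤ), I - 1, J - 1)
    · obtain ⟨hM, hK, hL⟩ : M = N + 1 ∧ K = I - 1 ∧ L = J - 1 := by
        simpa [Prod.ext_iff] using h1
      have p1 : ((M - 1 : ℤ), (K + 1 : ℤ), (L + 1 : ℤ)) = ((N : ℤ), I, J) := by
        simp [Prod.ext_iff]; omega
      have p2 : ((M + 1 : ℤ), (K + 1 : ℤ), (L + 1 : ℤ)) ≠ ((N : ℤ), I, J) := by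
        simp [Prod.ext_iff]; omega
      have p3 : (M, K, L) ≠ ((N - 1 : ℤ), I - 1, J - 1) := by
        simp [Prod.ext_iff]; omega
      rw [if_pos p1, if_neg p2, if_pos h1, if_neg p3]
      have : aC1 q (M - 1) (K + 1) (L + 1) = aC1 q N I J := by
        rw [show (M - 1 : ℤ) = N by omega, show (K + 1 : ℤ) = I by omega,
          show (L + 1 : ℤ) = J by omega]
      rw [this]
      ring
    · by_cases h2 : (M, K, L) = ((N - 1 : ℤ), I - 1, J - 1)
      · obtain ⟨hM, hK, hL⟩ : M = N - 1 ∧ K = I - 1 ∧ L = J - 1 := by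
          simpa [Prod.ext_iff] using h2
        have p1 : ((M - 1 : ℤ), (K + 1 : ℤ), (L + 1 : ℤ)) ≠ ((N : ℤ), I, J) := by
          simp [Prod.ext_iff]; omega
        have p2 : ((M + 1 : ℤ), (K + 1 : ℤ), (L + 1 : ℤ)) = ((N : ℤ), I, J) := by
          simp [Prod.ext_iff]; omega
        rw [if_neg p1, if_pos p2, if_neg h1, if_pos h2]
        have : aC2 q (M + 1) (K + 1) (L + 1) = aC2 q N I J := by
          rw [show (M + 1 : ℤ) = N by omega, show (K + 1 : ℤ) = I by omega,
            show (L + 1 : ℤ) = J by omega]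
        rw [this]
        ring
      · have p1 : ((M - 1 : ℤ), (K + 1 : ℤ), (L + 1 : ℤ)) ≠ ((N : ℤ), I, J) := by
          intro hcon
          apply h1
          have e1 : M - 1 = N := congrArg Prod.fst hcon
          have e2 : K + 1 = I := congrArg (fun p : ℤ × ℤ × ℤ => p.2.1) hcon
          have e3 : L + 1 = J := congrArg (fun p : ℤ × ℤ × ℤ => p.2.2) hcon
          simp only [Prod.mk.injEq]
          omega
        have p2 : ((M + 1 : ℤ), (K + 1 : ℤ), (L + 1 : ℤ)) ≠ ((N : ℤ), I, J) := by
          intro hcon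
          apply h2
          have e1 : M + 1 = N := congrArg Prod.fst hcon
          have e2 : K + 1 = I := congrArg (fun p : ℤ × ℤ × ℤ => p.2.1) hcon
          have e3 : L + 1 = J := congrArg (fun p : ℤ × ℤ × ℤ => p.2.2) hcon
          simp only [Prod.mk.injEq]
          omega
        rw [if_neg p1, if_neg p2, if_neg h1, if_neg h2]
        ring
  · -- B is β̂
    intro N I J h
    refine lp.ext (funext fun t => ?_)
    rw [hB2 (eH N I J) t]
    obtain ⟨⟨M, K, L⟩, ht⟩ := t
    simp only [τ1, τ2]
    rw [Yext_eH h, Yext_eH h, lp.coeFn_add, Pi.add_apply, lp.coeFn_smul, lp.coeFn_smul,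
      Pi.smul_apply, Pi.smul_apply, smul_eq_mul, smul_eq_mul, eH_apply, eH_apply]
    by_cases h1 : (M, K, L) = ((N + 1 : ℤ), I + 1, J - 1)
    · obtain ⟨hM, hK, hL⟩ : M = N + 1 ∧ K = I + 1 ∧ L = J - 1 := by
        simpa [Prod.ext_iff] using h1
      have p1 : ((M - 1 : ℤ), (K + -1 : ℤ), (L + 1 : ℤ)) = ((N : ℤ), I, J) := by
        simp [Prod.ext_iff]; omega
      have p2 : ((M + 1 : ℤ), (K + -1 : ℤ), (L + 1 : ℤ)) ≠ ((N : ℤ), I, J) := by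
        simp [Prod.ext_iff]; omega
      have p3 : (M, K, L) ≠ ((N - 1 : ℤ), I + 1, J - 1) := by
        simp [Prod.ext_iff]; omega
      rw [if_pos p1, if_neg p2, if_pos h1, if_neg p3]
      have : bC1 q (M - 1) (K + -1) (L + 1) = bC1 q N I J := by
        rw [show (M - 1 : ℤ) = N by omega, show (K + -1 : ℤ) = I by omega,
          show (L + 1 : ℤ) = J by omega]
      rw [this]
      ring
    · by_cases h2 : (M, K, L) = ((N - 1 : ℤ), I + 1, J - 1)
      · obtain ⟨hM, hK, hL⟩ : M = N - 1 ∧ K = I + 1 ∧ L = J - 1 := by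
          simpa [Prod.ext_iff] using h2
        have p1 : ((M - 1 : ℤ), (K + -1 : ℤ), (L + 1 : ℤ)) ≠ ((N : ℤ), I, J) := by
          simp [Prod.ext_iff]; omega
        have p2 : ((M + 1 : ℤ), (K + -1 : ℤ), (L + 1 : ℤ)) = ((N : ℤ), I, J) := by
          simp [Prod.ext_iff]; omega
        rw [if_neg p1, if_pos p2, if_neg h1, if_pos h2]
        have : bC2 q (M + 1) (K + -1) (L + 1) = bC2 q N I J := by
          rw [show (M + 1 : ℤ) = N by omega, show (K + -1 : ℤ) = I by omega,
            show (L + 1 : ℤ) = J by omega]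
        rw [this]
        ring
      · have p1 : ((M - 1 : ℤ), (K + -1 : ℤ), (L + 1 : ℤ)) ≠ ((N : ℤ), I, J) := by
          intro hcon
          apply h1
          have e1 : M - 1 = N := congrArg Prod.fst hcon
          have e2 : K + -1 = I := congrArg (fun p : ℤ × ℤ × ℤ => p.2.1) hcon
          have e3 : L + 1 = J := congrArg (fun p : ℤ × ℤ × ℤ => p.2.2) hcon
          simp only [Prod.mk.injEq]
          omega
        have p2 : ((M + 1 : ℤ), (K + -1 : ℤ), (L + 1 : ℤ)) ≠ ((N : ℤ), I, J) := by
          intro hcon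
          apply h2
          have e1 : M + 1 = N := congrArg Prod.fst hcon
          have e2 : K + -1 = I := congrArg (fun p : ℤ × ℤ × ℤ => p.2.1) hcon
          have e3 : L + 1 = J := congrArg (fun p : ℤ × ℤ × ℤ => p.2.2) hcon
          simp only [Prod.mk.injEq]
          omega
        rw [if_neg p1, if_neg p2, if_neg h1, if_neg h2]
        ring
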